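/- In the setting of the construction of V₀(ξ) = sup_{u} sup_{t≥0} { (α(|x(t,ξ,u)|) − ∫₀^t γ₁(|y(s,ξ,u)|) ds − ∫₀^∞ 2γ̃₂(|u(s)|) ds)·k(t) }, for any input u with ∫₀^∞ γ̃₂(|u(s)|) ds > β(|ξ|, 0), the quantity inside the supremum is ≤ 0 for all t ≥ 0. Consequently, since V₀(ξ) ≥ 0, the supremum over inputs may be restricted to the set U(|ξ|) := { u : ∫₀^∞ γ̃₂(|u(s)|) ds ≤ β(|ξ|, 0) } without changing V₀(ξ). -/

import Mathlib

open MeasureTheory Set Filter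

noncomputable section

/-- Class `K` function: continuous, strictly increasing, zero at zero (on `[0,∞)`). -/
def ClassK (f : ℝ → ℝ) : Prop :=
  ContinuousOn f (Set.Ici 0) ∧ StrictMonoOn f (Set.Ici 0) ∧ f 0 = 0 ∧
    ∀ s, 0 ≤ s → 0 ≤ f s

/-- Class `K∞` function: class `K` and unbounded. -/
def ClassKinf (f : ℝ → ℝ) : Prop :=
  ClassK f ∧ ∀ M : ℝ, ∃ s, 0 ≤ s ∧ M < f s

/-- Class `L` function: continuous, strictly decreasing, positive, tending to `0` at `∞`. -/
def ClassL (f : ℝ → ℝ) : Prop :=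
  ContinuousOn f (Set.Ici 0) ∧ StrictAntiOn f (Set.Ici 0) ∧
    (∀ s, 0 ≤ s → 0 < f s) ∧ Filter.Tendsto f Filter.atTop (nhds 0)

/-- Class `KL` function. -/
def ClassKL (β : ℝ → ℝ → ℝ) : Prop :=
  (∀ t, 0 ≤ t → ClassK (fun s => β s t)) ∧
  ∀ s, 0 ≤ s → ContinuousOn (β s) (Set.Ici 0) ∧ AntitoneOn (β s) (Set.Ici 0) ∧
    Filter.Tendsto (β s) Filter.atTop (nhds 0)

/-- Positive definite function on `[0,∞)`. -/
def PosDef (κ : ℝ → ℝ) : Prop := κ 0 = 0 ∧ ∀ s, 0 < s → 0 < κ s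
abbrev Vec (n : ℕ) := EuclideanSpace ℝ (Fin n)

/-- Admissible input: measurable and locally essentially bounded. -/
def Adm {m : ℕ} (u : ℝ → Vec m) : Prop :=
  Measurable u ∧ ∀ T : ℝ, 0 < T → ∃ C, ∀ᵐ s ∂volume, s ∈ Set.Icc (0 : ℝ) T → ‖u s‖ ≤ C

/-- (Carathéodory) solution on `[0,∞)` of `ẋ = f(x,u)`, `x(0) = ξ`, in integral form. -/
def IsSol {n m : ℕ} (f : Vec n → Vec m → Vec n) (u : ℝ → Vec m) (ξ : Vec n)
    (x : ℝ → Vec n) : Prop :=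
  ContinuousOn x (Set.Ici 0) ∧ x 0 = ξ ∧
    ∀ t, 0 ≤ t → x t = ξ + ∫ s in (0 : ℝ)..t, f (x s) (u s)

/-- `f` jointly continuous and locally Lipschitz in `x` uniformly in `u`. -/
def RegularRHS {n m : ℕ} (f : Vec n → Vec m → Vec n) : Prop :=
  Continuous (fun p : Vec n × Vec m => f p.1 p.2) ∧
  ∀ K : Set (Vec n), IsCompact K → ∃ L, 0 ≤ L ∧
    ∀ μ : Vec m, ∀ a ∈ K, ∀ b ∈ K, ‖f a μ - f b μ‖ ≤ L * ‖a - b‖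

/-- Forward completeness: every initial state and admissible input yield a global solution. -/
def ForwardComplete {n m : ℕ} (f : Vec n → Vec m → Vec n) : Prop :=
  ∀ (ξ : Vec n) (u : ℝ → Vec m), Adm u → ∃ x, IsSol f u ξ x

open scoped ENNReal in
/-- The set of values whose supremum defines `V₀(ξ)`:
`(α(|x(t,ξ,u)|) - ∫₀ᵗ γ₁(|y|) - ∫₀^∞ 2 γ̃₂(|u|)) · k(t)` over admissible inputs `u`
(with `γ̃₂(|u(·)|)` integrable on `(0,∞)`), solutions `x`, and times `t ≥ 0`. -/
def Vset {n m q : ℕ} (f : Vec n → Vec m → Vec n) (h : Vec n → Vec q)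
    (α γ₁ γ₂t k : ℝ → ℝ) (ξ : Vec n) : Set ℝ :=
  {z | ∃ (u : ℝ → Vec m) (x : ℝ → Vec n) (t : ℝ), Adm u ∧
    MeasureTheory.IntegrableOn (fun s => γ₂t ‖u s‖) (Set.Ioi 0) ∧ IsSol f u ξ x ∧ 0 ≤ t ∧
    z = (α ‖x t‖ - (∫ s in (0 : ℝ)..t, γ₁ ‖h (x s)‖)
          - 2 * ∫ s in Set.Ioi (0 : ℝ), γ₂t ‖u s‖) * k t}

/-- As `Vset`, but with the inputs restricted to
`U(|ξ|) = {u : ∫₀^∞ γ̃₂(|u(s)|) ds ≤ β(|ξ|, 0)}`. -/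
def VsetR {n m q : ℕ} (f : Vec n → Vec m → Vec n) (h : Vec n → Vec q)
    (α : ℝ → ℝ) (β : ℝ → ℝ → ℝ) (γ₁ γ₂t k : ℝ → ℝ) (ξ : Vec n) : Set ℝ :=
  {z | ∃ (u : ℝ → Vec m) (x : ℝ → Vec n) (t : ℝ), Adm u ∧
    MeasureTheory.IntegrableOn (fun s => γ₂t ‖u s‖) (Set.Ioi 0) ∧
    (∫ s in Set.Ioi (0 : ℝ), γ₂t ‖u s‖) ≤ β ‖ξ‖ 0 ∧ IsSol f u ξ x ∧ 0 ≤ t ∧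
    z = (α ‖x t‖ - (∫ s in (0 : ℝ)..t, γ₁ ‖h (x s)‖)
          - 2 * ∫ s in Set.Ioi (0 : ℝ), γ₂t ‖u s‖) * k t}

/-!
For an input with `∫₀^∞ γ̃₂(|u|) > β(|ξ|, 0)` the iIOSS estimate bounds
`α(|x(t)|) - ∫₀ᵗ γ₁(|y|) - 2 ∫₀^∞ γ̃₂(|u|)` by `β(|ξ|, 0) - ∫₀^∞ γ̃₂(|u|) < 0`, and `k > 0`
preserves the sign.
The zero input lies in `U(|ξ|)` and contributes the value `α(|ξ|) k(0) ≥ 0` at `t = 0`, so every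
value discarded by the restriction is dominated by a retained one. Hence both sets have the same
upper bounds, and their suprema agree even when they are unbounded (where `sSup` is junk).
-/

theorem adm_zero {m : ℕ} : Adm (fun _ : ℝ => (0 : Vec m)) :=
  ⟨measurable_const, fun _ _ => ⟨0, .of_forall fun _ _ => by simp⟩⟩

section ValueSets

variable {n m q : ℕ} {f : Vec n → Vec m → Vec n} {h : Vec n → Vec q}
  {α : ℝ → ℝ} {β : ℝ → ℝ → ℝ} {γ₁ γ₂t k : ℝ → ℝ} {ξ : Vec n}

theorem VsetR_subset_Vset : VsetR f h α β γ₁ γ₂t k ξ ⊆ Vset f h α γ₁ γ₂t k ξ := by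
  rintro z ⟨u, x, t, hu, hint, -, hsol, ht, hz⟩
  exact ⟨u, x, t, hu, hint, hsol, ht, hz⟩

theorem exists_nonneg_mem_VsetR (hfc : ForwardComplete f) (hα : ∀ s, 0 ≤ s → 0 ≤ α s)
    (hβ : 0 ≤ β ‖ξ‖ 0) (hγ₂ : γ₂t 0 = 0) (hk : 0 ≤ k 0) :
    ∃ z ∈ VsetR f h α β γ₁ γ₂t k ξ, 0 ≤ z := by
  obtain ⟨x, hx⟩ := hfc ξ _ adm_zero
  have hint : IntegrableOn (fun s : ℝ => γ₂t ‖(0 : Vec m)‖) (Ioi 0) := by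
    simp only [norm_zero, hγ₂]
    exact integrableOn_zero
  have hI : ∫ _ in Ioi (0 : ℝ), γ₂t ‖(0 : Vec m)‖ = 0 := by simp [hγ₂]
  refine ⟨α ‖ξ‖ * k 0, ⟨_, x, 0, adm_zero, hint, hI.trans_le hβ, hx, le_rfl, ?_⟩,
    mul_nonneg (hα _ (norm_nonneg ξ)) hk⟩
  rw [hI, hx.2.1, intervalIntegral.integral_same]
  ring

theorem V0_integrand_nonpos_of_lt_integral
    (hioss : ∀ (u : ℝ → Vec m) (x : ℝ → Vec n), Adm u →
      IntegrableOn (fun s => γ₂t ‖u s‖) (Ioi 0) → IsSol f u ξ x →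
      ∀ t, 0 ≤ t → α ‖x t‖ ≤ β ‖ξ‖ 0 + (∫ s in (0 : ℝ)..t, γ₁ ‖h (x s)‖)
        + ∫ s in Ioi (0 : ℝ), γ₂t ‖u s‖)
    (hk : ∀ t, 0 ≤ t → 0 ≤ k t) :
    ∀ (u : ℝ → Vec m) (x : ℝ → Vec n), Adm u →
      IntegrableOn (fun s => γ₂t ‖u s‖) (Ioi 0) → IsSol f u ξ x →
      β ‖ξ‖ 0 < (∫ s in Ioi (0 : ℝ), γ₂t ‖u s‖) →
      ∀ t, 0 ≤ t →
        (α ‖x t‖ - (∫ s in (0 : ℝ)..t, γ₁ ‖h (x s)‖)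
          - 2 * ∫ s in Ioi (0 : ℝ), γ₂t ‖u s‖) * k t ≤ 0 :=
  fun u x hu hint hsol hI t ht =>
    mul_nonpos_of_nonpos_of_nonneg (by linarith [hioss u x hu hint hsol t ht]) (hk t ht)

end ValueSets

theorem stmt15_general {n m q : ℕ} (f : Vec n → Vec m → Vec n) (h : Vec n → Vec q)
    (hfc : ForwardComplete f)
    (α β γ₁ γ₂t : _) (hα : ClassKinf α) (hβ : ClassKL β)
    (hγ₂ : ClassK γ₂t)
    (k : ℝ → ℝ) (c₁ c₂ : ℝ) (hc₁ : 0 < c₁)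
    (hk : ∀ t, 0 ≤ t → k t ∈ Set.Icc c₁ c₂)
    (hioss : ∀ (ξ : Vec n) (u : ℝ → Vec m) (x : ℝ → Vec n), Adm u →
      MeasureTheory.IntegrableOn (fun s => γ₂t ‖u s‖) (Set.Ioi 0) → IsSol f u ξ x →
      ∀ t, 0 ≤ t → α ‖x t‖ ≤ β ‖ξ‖ 0 + (∫ s in (0 : ℝ)..t, γ₁ ‖h (x s)‖)
        + ∫ s in Set.Ioi (0 : ℝ), γ₂t ‖u s‖) :
    ∀ ξ : Vec n,
      (∀ (u : ℝ → Vec m) (x : ℝ → Vec n), Adm u →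
        MeasureTheory.IntegrableOn (fun s => γ₂t ‖u s‖) (Set.Ioi 0) → IsSol f u ξ x →
        β ‖ξ‖ 0 < (∫ s in Set.Ioi (0 : ℝ), γ₂t ‖u s‖) →
        ∀ t, 0 ≤ t →
          (α ‖x t‖ - (∫ s in (0 : ℝ)..t, γ₁ ‖h (x s)‖)
            - 2 * ∫ s in Set.Ioi (0 : ℝ), γ₂t ‖u s‖) * k t ≤ 0) ∧
      sSup (Vset f h α γ₁ γ₂t k ξ) = sSup (VsetR f h α β γ₁ γ₂t k ξ) := by
  intro ξ
  have hk_nonneg : ∀ t, 0 ≤ t → 0 ≤ k t := fun t ht => hc₁.le.trans (hk t ht).1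
  have hnonpos := V0_integrand_nonpos_of_lt_integral (hioss ξ) hk_nonneg
  obtain ⟨z₀, hz₀, hz₀_nonneg⟩ := exists_nonneg_mem_VsetR (h := h) (γ₁ := γ₁) hfc hα.1.2.2.2
    ((hβ.1 0 le_rfl).2.2.2 _ (norm_nonneg ξ)) hγ₂.2.2.1 (hk_nonneg 0 le_rfl)
  refine ⟨hnonpos, csSup_eq_csSup_of_forall_exists_le ?_
    fun z hz => ⟨z, VsetR_subset_Vset hz, le_rfl⟩⟩
  rintro z ⟨u, x, t, hu, hint, hsol, ht, rfl⟩
  by_cases hU : ∫ s in Ioi (0 : ℝ), γ₂t ‖u s‖ ≤ β ‖ξ‖ 0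
  · exact ⟨_, ⟨u, x, t, hu, hint, hU, hsol, ht, rfl⟩, le_rfl⟩
  · exact ⟨z₀, hz₀, (hnonpos u x hu hint hsol (not_le.mp hU) t ht).trans hz₀_nonneg⟩

/-- if `∫₀^∞ γ̃₂(|u|) > β(|ξ|, 0)`, the quantity inside the supremum defining
`V₀(ξ)` is `≤ 0` for all `t ≥ 0`; consequently, since `V₀(ξ) ≥ 0`, the supremum may be
restricted to inputs in `U(|ξ|)` without changing its value. -/
theorem stmt15 {n m q : ℕ} (f : Vec n → Vec m → Vec n) (h : Vec n → Vec q)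
    (hf : RegularRHS f) (hf0 : f 0 0 = 0) (hh : LocallyLipschitz h) (hh0 : h 0 = 0)
    (hfc : ForwardComplete f)
    (α β γ₁ γ₂t : _) (hα : ClassKinf α) (hβ : ClassKL β) (hγ₁ : ClassK γ₁)
    (hγ₂ : ClassK γ₂t)
    (k : ℝ → ℝ) (hkc : Continuous k) (c₁ c₂ : ℝ) (hc₁ : 0 < c₁)
    (hk : ∀ t, 0 ≤ t → k t ∈ Set.Icc c₁ c₂)
    (hioss : ∀ (ξ : Vec n) (u : ℝ → Vec m) (x : ℝ → Vec n), Adm u →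
      MeasureTheory.IntegrableOn (fun s => γ₂t ‖u s‖) (Set.Ioi 0) → IsSol f u ξ x →
      ∀ t, 0 ≤ t → α ‖x t‖ ≤ β ‖ξ‖ 0 + (∫ s in (0 : ℝ)..t, γ₁ ‖h (x s)‖)
        + ∫ s in Set.Ioi (0 : ℝ), γ₂t ‖u s‖) :
    ∀ ξ : Vec n,
      (∀ (u : ℝ → Vec m) (x : ℝ → Vec n), Adm u →
        MeasureTheory.IntegrableOn (fun s => γ₂t ‖u s‖) (Set.Ioi 0) → IsSol f u ξ x →
        β ‖ξ‖ 0 < (∫ s in Set.Ioi (0 : ℝ), γ₂t ‖u s‖) →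
        ∀ t, 0 ≤ t →
          (α ‖x t‖ - (∫ s in (0 : ℝ)..t, γ₁ ‖h (x s)‖)
            - 2 * ∫ s in Set.Ioi (0 : ℝ), γ₂t ‖u s‖) * k t ≤ 0) ∧
      sSup (Vset f h α γ₁ γ₂t k ξ) = sSup (VsetR f h α β γ₁ γ₂t k ξ) :=
  stmt15_general f h hfc α β γ₁ γ₂t hα hβ hγ₂ k c₁ c₂ hc₁ hk hioss
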